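/- arXiv:2412.01264 — 2 statements merged into one kernel-verified Lean document; each statement's English description precedes it below -/
import Mathlib

section
/- In the LSAP partition reduction, for any choice of subset I ⊆ [n] of size p selected at leaf 1 (with leaf 2 forced to select items n+1,...,n+p), the worst-case cost equals pW + max{X(I), W − X(I)}, where X(I) = Σ_{i∈I} w_i. Hence the minimum over I with |I| = p of this cost is at least pW + W/2, with equality if and only if some size-p subset I satisfies X(I) = W/2. -/
/-!
Since `2 X(I) = X(I) + X(I)` and `W = X(I) + (W - X(I))`, the adversary's choice adds
`X(I) + max {X(I), W - X(I)}` to `pW - X(I)`, which gives the worst-case cost. The larger of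
two numbers with sum `W` is at least `W / 2`, with equality exactly when both equal `W / 2`;
the minimum over the finitely many size-`p` subsets is attained, so it equals `pW + W / 2`
exactly when some subset has weight `W / 2`.
-/

section LinearOrderedField

variable {K : Type*} [Field K] [LinearOrder K] [IsStrictOrderedRing K]

lemma sub_add_max_two_mul_eq (a x W : K) :
    (a - x) + max (2 * x) W = a + max x (W - x) := by
  have hsplit : max (2 * x) W = x + max x (W - x) := by
    rw [← max_add_add_left, two_mul, add_sub_cancel]
  rw [hsplit]
  ring

lemma half_le_max_self_sub (x W : K) : W / 2 ≤ max x (W - x) := by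
  rcases le_total x (W / 2) with h | h
  · exact le_max_of_le_right (by linarith)
  · exact le_max_of_le_left h

lemma max_self_sub_eq_half_iff {x W : K} : max x (W - x) = W / 2 ↔ x = W / 2 := by
  constructor
  · intro h
    have hx := le_max_left x (W - x)
    have hWx := le_max_right x (W - x)
    rw [h] at hx hWx
    linarith
  · rintro rfl
    rw [sub_half, max_self]

end LinearOrderedField

section FiniteInf

variable {α ι : Type*} {P : ι → Prop} {f : ι → α} {c : α}

lemma setOf_exists_and_eq_finite [Finite ι] : {v : α | ∃ i, P i ∧ v = f i}.Finite :=
  (Set.finite_range f).subset fun _ ⟨i, _, hv⟩ => ⟨i, hv.symm⟩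

variable [ConditionallyCompleteLinearOrder α]

lemma le_csInf_setOf_exists_and_eq (hP : ∃ i, P i) (hc : ∀ i, P i → c ≤ f i) :
    c ≤ sInf {v | ∃ i, P i ∧ v = f i} := by
  obtain ⟨i, hi⟩ := hP
  refine le_csInf ⟨f i, i, hi, rfl⟩ ?_
  rintro _ ⟨j, hj, rfl⟩
  exact hc j hj

lemma csInf_setOf_exists_and_eq_eq_iff [Finite ι] (hP : ∃ i, P i) (hc : ∀ i, P i → c ≤ f i) :
    sInf {v | ∃ i, P i ∧ v = f i} = c ↔ ∃ i, P i ∧ f i = c := by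
  obtain ⟨i, hi⟩ := hP
  constructor
  · intro h
    obtain ⟨j, hj, hv⟩ := Set.Nonempty.csInf_mem (s := {v | ∃ i, P i ∧ v = f i})
      ⟨f i, i, hi, rfl⟩ setOf_exists_and_eq_finite
    exact ⟨j, hj, hv ▸ h⟩
  · rintro ⟨j, hj, rfl⟩
    exact le_antisymm (csInf_le setOf_exists_and_eq_finite.bddBelow ⟨j, hj, rfl⟩)
      (le_csInf_setOf_exists_and_eq ⟨i, hi⟩ hc)

end FiniteInf

theorem stmt7_general (n p : ℕ) (hp : n = 2 * p)
    (w : Fin n → ℕ)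
    (W : ℕ) :
    (∀ I : Finset (Fin n), I.card = p →
      ((p : ℝ) * W - (∑ i ∈ I, (w i : ℝ))) + max (2 * ∑ i ∈ I, (w i : ℝ)) (W : ℝ) =
        (p : ℝ) * W + max (∑ i ∈ I, (w i : ℝ)) ((W : ℝ) - ∑ i ∈ I, (w i : ℝ))) ∧
    (p : ℝ) * W + (W : ℝ) / 2 ≤
      sInf {v : ℝ | ∃ I : Finset (Fin n), I.card = p ∧
        v = (p : ℝ) * W + max (∑ i ∈ I, (w i : ℝ)) ((W : ℝ) - ∑ i ∈ I, (w i : ℝ))} ∧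
    (sInf {v : ℝ | ∃ I : Finset (Fin n), I.card = p ∧
        v = (p : ℝ) * W + max (∑ i ∈ I, (w i : ℝ)) ((W : ℝ) - ∑ i ∈ I, (w i : ℝ))} =
        (p : ℝ) * W + (W : ℝ) / 2 ↔
      ∃ I : Finset (Fin n), I.card = p ∧ (∑ i ∈ I, (w i : ℝ)) = (W : ℝ) / 2) := by
  have hsubset : ∃ I : Finset (Fin n), I.card = p := by
    obtain ⟨I, -, hI⟩ := Finset.exists_subset_card_eq (s := (Finset.univ : Finset (Fin n)))
      (n := p) (by rw [Finset.card_univ, Fintype.card_fin]; omega)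
    exact ⟨I, hI⟩
  have hlower : ∀ I : Finset (Fin n), I.card = p → (p : ℝ) * W + (W : ℝ) / 2 ≤
      (p : ℝ) * W + max (∑ i ∈ I, (w i : ℝ)) ((W : ℝ) - ∑ i ∈ I, (w i : ℝ)) :=
    fun I _ => by gcongr; exact half_le_max_self_sub _ _
  refine ⟨fun I _ => sub_add_max_two_mul_eq _ _ _,
    le_csInf_setOf_exists_and_eq hsubset hlower, ?_⟩
  rw [csInf_setOf_exists_and_eq_eq_iff hsubset hlower]
  simp only [add_right_inj, max_self_sub_eq_half_iff]

/-- In the LSAP partition reduction, the worst-case cost for a size-p subset I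
selected at leaf 1 equals pW + max{X(I), W − X(I)}; hence the minimum over such
I is at least pW + W/2, with equality iff some size-p subset has weight W/2. -/
theorem stmt7 (n p : ℕ) (hp : n = 2 * p)
    (w : Fin n → ℕ) (hw : ∀ i, 0 < w i)
    (W : ℕ) (hW : W = ∑ i, w i) :
    (∀ I : Finset (Fin n), I.card = p →
      ((p : ℝ) * W - (∑ i ∈ I, (w i : ℝ))) + max (2 * ∑ i ∈ I, (w i : ℝ)) (W : ℝ) =
        (p : ℝ) * W + max (∑ i ∈ I, (w i : ℝ)) ((W : ℝ) - ∑ i ∈ I, (w i : ℝ))) ∧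
    (p : ℝ) * W + (W : ℝ) / 2 ≤
      sInf {v : ℝ | ∃ I : Finset (Fin n), I.card = p ∧
        v = (p : ℝ) * W + max (∑ i ∈ I, (w i : ℝ)) ((W : ℝ) - ∑ i ∈ I, (w i : ℝ))} ∧
    (sInf {v : ℝ | ∃ I : Finset (Fin n), I.card = p ∧
        v = (p : ℝ) * W + max (∑ i ∈ I, (w i : ℝ)) ((W : ℝ) - ∑ i ∈ I, (w i : ℝ))} =
        (p : ℝ) * W + (W : ℝ) / 2 ↔
      ∃ I : Finset (Fin n), I.card = p ∧ (∑ i ∈ I, (w i : ℝ)) = (W : ℝ) / 2) :=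
  stmt7_general n p hp w W
end

section
/- Under the local budgeted uncertainty set, the adversary problem decomposes: the maximum over ξ ∈ U_loc(Γ) of Σ_{j∈[N]} c_j^T T(c_j + ξ_j) equals Σ_{j∈[N]} max{ c_j^T x_k : k ∈ K, ρ_k^j ≤ Γ }, where ρ_k^j is the minimum ℓ1-norm of a perturbation routing sample j to leaf k. -/
/-- Univariate decision trees over ℝ^n with leaf labels in `K`. -/
inductive UTree (n : ℕ) (K : Type) where
  | leaf : K → UTree n K
  | node : Fin n → ℝ → UTree n K → UTree n K → UTree n K

namespace UTree

/-- Route a vector through the tree: go left iff `v i ≤ θ`. -/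
noncomputable def route {n : ℕ} {K : Type} : UTree n K → (Fin n → ℝ) → K
  | leaf k, _ => k
  | node i θ l r, v => if v i ≤ θ then l.route v else r.route v

/-- Depth of the tree. -/
def depth {n : ℕ} {K : Type} : UTree n K → ℕ
  | leaf _ => 0
  | node _ _ l r => 1 + max l.depth r.depth

/-- List of leaf labels of the tree. -/
def leavesList {n : ℕ} {K : Type} : UTree n K → List K
  | leaf k => [k]
  | node _ _ l r => l.leavesList ++ r.leavesList

/-- All thresholds at splits on coordinate `i` lie in `[lo i, hi i]`. -/
def validThresh {n : ℕ} {K : Type} (lo hi : Fin n → ℝ) : UTree n K → Prop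
  | leaf _ => True
  | node i θ l r => lo i ≤ θ ∧ θ ≤ hi i ∧ validThresh lo hi l ∧ validThresh lo hi r

end UTree

/-!
The objective is a sum of per-sample terms and `U_loc(Γ)` is a product of per-sample
ℓ1-balls, so the worst case is attained samplewise. For one sample, the leaves reached from
the ball of radius `Γ` are exactly the leaves `k` with `ρ k ≤ Γ` (attainment gives `⊇`, the
lower bound gives `⊆`); this set is finite and contains the nominal leaf, so its best value
is a maximum.
-/

open Set

theorem UTree.route_mem_leavesList {n : ℕ} {K : Type} (t : UTree n K) (v : Fin n → ℝ) :
    t.route v ∈ t.leavesList := by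
  induction t with
  | leaf k => simp [UTree.route, UTree.leavesList]
  | node i θ l r hl hr =>
    simp only [UTree.route, UTree.leavesList, List.mem_append]
    split_ifs
    · exact Or.inl hl
    · exact Or.inr hr

theorem isGreatest_sum_of_isGreatest {ι M : Type*} [Fintype ι] [AddCommMonoid M]
    [PartialOrder M] [IsOrderedAddMonoid M] {X : ι → Type*}
    {P : ∀ j, Set (X j)} {f : ∀ j, X j → M} {m : ι → M}
    (h : ∀ j, IsGreatest (f j '' P j) (m j)) :
    IsGreatest {w | ∃ x : ∀ j, X j, (∀ j, x j ∈ P j) ∧ w = ∑ j, f j (x j)} (∑ j, m j) := by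
  constructor
  · choose x hxP hfx using fun j => (h j).1
    exact ⟨x, hxP, (Finset.sum_congr rfl fun j _ => hfx j).symm⟩
  · rintro w ⟨x, hxP, rfl⟩
    exact Finset.sum_le_sum fun j _ => (h j).2 (mem_image_of_mem _ (hxP j))

theorem Set.Finite.isGreatest_csSup {α : Type*} [ConditionallyCompleteLinearOrder α]
    {s : Set α} (hfin : s.Finite) (hne : s.Nonempty) :
    IsGreatest s (sSup s) :=
  ⟨hne.csSup_mem hfin, fun _ hw => le_csSup hfin.bddAbove hw⟩

section Perturbation

variable {n : ℕ} {K : Type} (t : UTree n K) (c : Fin n → ℝ) (ρ : K → ℝ) (Γ : ℝ)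

theorem UTree.image_route_l1Ball
    (hatt : ∀ k ∈ t.leavesList, ∃ ξ : Fin n → ℝ,
      ∑ i, |ξ i| = ρ k ∧ t.route (fun i => c i + ξ i) = k)
    (hmin : ∀ ξ : Fin n → ℝ, ρ (t.route (fun i => c i + ξ i)) ≤ ∑ i, |ξ i|) :
    (fun ξ : Fin n → ℝ => t.route (fun i => c i + ξ i)) '' {ξ | ∑ i, |ξ i| ≤ Γ} =
      {k | k ∈ t.leavesList ∧ ρ k ≤ Γ} := by
  ext k
  constructor
  · rintro ⟨ξ, hξ, rfl⟩
    exact ⟨t.route_mem_leavesList _, (hmin ξ).trans hξ⟩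
  · rintro ⟨hk, hρ⟩
    obtain ⟨ξ, hξ, hroute⟩ := hatt k hk
    exact ⟨ξ, hξ.trans_le hρ, hroute⟩

theorem UTree.isGreatest_image_route_l1Ball (value : K → ℝ) (hΓ : 0 ≤ Γ)
    (hatt : ∀ k ∈ t.leavesList, ∃ ξ : Fin n → ℝ,
      ∑ i, |ξ i| = ρ k ∧ t.route (fun i => c i + ξ i) = k)
    (hmin : ∀ ξ : Fin n → ℝ, ρ (t.route (fun i => c i + ξ i)) ≤ ∑ i, |ξ i|)
    (hnom0 : ρ (t.route c) = 0) :
    IsGreatest ((fun ξ : Fin n → ℝ => value (t.route (fun i => c i + ξ i))) ''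
        {ξ | ∑ i, |ξ i| ≤ Γ})
      (sSup {w | ∃ k ∈ t.leavesList, ρ k ≤ Γ ∧ w = value k}) := by
  have hreach : (fun ξ : Fin n → ℝ => value (t.route (fun i => c i + ξ i))) ''
      {ξ | ∑ i, |ξ i| ≤ Γ} = value '' {k | k ∈ t.leavesList ∧ ρ k ≤ Γ} := by
    rw [← t.image_route_l1Ball c ρ Γ hatt hmin, image_image]
  have hvalues : {w | ∃ k ∈ t.leavesList, ρ k ≤ Γ ∧ w = value k} =
      value '' {k | k ∈ t.leavesList ∧ ρ k ≤ Γ} := by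
    ext w
    simp only [mem_ofPred_eq, mem_image, and_assoc, eq_comm]
  have hnominal : t.route c ∈ {k | k ∈ t.leavesList ∧ ρ k ≤ Γ} :=
    ⟨t.route_mem_leavesList c, hnom0.trans_le hΓ⟩
  rw [hreach, hvalues]
  exact (((List.finite_toSet _).subset fun _ hk => hk.1).image value).isGreatest_csSup
    ⟨_, mem_image_of_mem value hnominal⟩

end Perturbation

theorem stmt9_general (n N : ℕ) (K : Type) (c : Fin N → Fin n → ℝ)
    (t : UTree n K) (sol : K → (Fin n → ℝ))
    (Γ : ℝ) (hΓ : 0 ≤ Γ)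
    (ρ : Fin N → K → ℝ)
    -- ρ j k is attained by some perturbation routing sample j to leaf k
    (hatt : ∀ j : Fin N, ∀ k ∈ t.leavesList,
      ∃ ξ : Fin n → ℝ, (∑ i, |ξ i|) = ρ j k ∧ t.route (fun i => c j i + ξ i) = k)
    -- ρ j k is a lower bound on the ℓ1-norm of any such perturbation
    (hmin : ∀ (j : Fin N) (k : K) (ξ : Fin n → ℝ),
      t.route (fun i => c j i + ξ i) = k → ρ j k ≤ ∑ i, |ξ i|)
    -- the nominal leaf costs nothing and is a leaf of the tree
    (hnom0 : ∀ j : Fin N, ρ j (t.route (c j)) = 0) :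
    sSup {w : ℝ | ∃ ξ : Fin N → Fin n → ℝ,
        (∀ j, ∑ i, |ξ j i| ≤ Γ) ∧
        w = ∑ j, ∑ i, c j i * sol (t.route (fun i' => c j i' + ξ j i')) i} =
      ∑ j, sSup {w : ℝ | ∃ k ∈ t.leavesList, ρ j k ≤ Γ ∧
        w = ∑ i, c j i * sol k i} := by
  have hworst : ∀ j, IsGreatest
      ((fun ξ : Fin n → ℝ => ∑ i, c j i * sol (t.route (fun i' => c j i' + ξ i')) i) ''
        {ξ | ∑ i, |ξ i| ≤ Γ})
      (sSup {w : ℝ | ∃ k ∈ t.leavesList, ρ j k ≤ Γ ∧ w = ∑ i, c j i * sol k i}) :=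
    fun j => t.isGreatest_image_route_l1Ball (c j) (ρ j) Γ (fun k => ∑ i, c j i * sol k i)
      hΓ (hatt j) (fun ξ => hmin j _ ξ rfl) (hnom0 j)
  exact (isGreatest_sum_of_isGreatest hworst).csSup_eq

/-- Under the local budgeted uncertainty set, the adversary problem decomposes
samplewise: the worst case equals the sum over samples of the worst leaf
reachable within the per-sample budget. -/
theorem stmt9 (n N : ℕ) (K : Type) (c : Fin N → Fin n → ℝ)
    (t : UTree n K) (sol : K → (Fin n → ℝ))
    (Γ : ℝ) (hΓ : 0 ≤ Γ)
    (ρ : Fin N → K → ℝ)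
    -- ρ j k is attained by some perturbation routing sample j to leaf k
    (hatt : ∀ j : Fin N, ∀ k ∈ t.leavesList,
      ∃ ξ : Fin n → ℝ, (∑ i, |ξ i|) = ρ j k ∧ t.route (fun i => c j i + ξ i) = k)
    -- ρ j k is a lower bound on the ℓ1-norm of any such perturbation
    (hmin : ∀ (j : Fin N) (k : K) (ξ : Fin n → ℝ),
      t.route (fun i => c j i + ξ i) = k → ρ j k ≤ ∑ i, |ξ i|)
    -- the nominal leaf costs nothing and is a leaf of the tree
    (hnom0 : ∀ j : Fin N, ρ j (t.route (c j)) = 0)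
    (hnomleaf : ∀ j : Fin N, t.route (c j) ∈ t.leavesList) :
    sSup {w : ℝ | ∃ ξ : Fin N → Fin n → ℝ,
        (∀ j, ∑ i, |ξ j i| ≤ Γ) ∧
        w = ∑ j, ∑ i, c j i * sol (t.route (fun i' => c j i' + ξ j i')) i} =
      ∑ j, sSup {w : ℝ | ∃ k ∈ t.leavesList, ρ j k ≤ Γ ∧
        w = ∑ i, c j i * sol k i} :=
  stmt9_general n N K c t sol Γ hΓ ρ hatt hmin hnom0
end
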